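/- arXiv:2406.16627 — 3 statements merged into one kernel-verified Lean document; each statement's English description precedes it below -/
import Mathlib

section
/- Let 0 < ε < 1/2 and 0 < α < 1/2, let a ∈ ℂ, and let k be an odd positive integer. Let X_1, …, X_k be independent, identically distributed complex-valued random variables such that P(|X_1 − a| > ε) ≤ α. Then P(|median{X_j}_{j=1}^k − a| > 2ε) ≤ 2^k α^{k/2}. -/
open MeasureTheory Real
open scoped ENNReal NNReal

noncomputable section

/-- The half-open unit cube `[0,1)^d`. -/
def unitCube (d : ℕ) : Set (Fin d → ℝ) := Set.univ.pi fun _ => Set.Ico (0 : ℝ) 1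

/-- `INT f = ∫_{[0,1]^d} f(x) dx`. -/
def INT {d : ℕ} (f : (Fin d → ℝ) → ℂ) : ℂ := ∫ x in unitCube d, f x

/-- The character `x ↦ e^{2πi w·x}`. -/
def eWX {d : ℕ} (w : Fin d → ℤ) (x : Fin d → ℝ) : ℂ :=
  Complex.exp (2 * (Real.pi : ℂ) * Complex.I * ∑ j, (w j : ℂ) * (x j : ℂ))

/-- Fourier coefficient `f̂(w) = ∫_{[0,1]^d} f(x) e^{-2πi w·x} dx`. -/
def fCoeff {d : ℕ} (f : (Fin d → ℝ) → ℂ) (w : Fin d → ℤ) : ℂ :=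
  ∫ x in unitCube d,
    f x * Complex.exp (-(2 * (Real.pi : ℂ)) * Complex.I * ∑ j, (w j : ℂ) * (x j : ℂ))

/-- Truncated periodized Gaussian window `G_{L,r,l}`. -/
def Gwin (N : ℕ) (r L : ℝ) (l : ℤ) : ℝ :=
  ∑' k : ℤ, if |(l : ℝ) + k * N| ≤ L then
      (r * Real.sqrt (2 * Real.pi))⁻¹ * Real.exp (-((l : ℝ) + k * N) ^ 2 / (2 * r ^ 2))
    else 0

/-- Fully periodized (untruncated) Gaussian window `G_{r,l}`. -/
def Gfull (N : ℕ) (r : ℝ) (l : ℤ) : ℝ :=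
  ∑' k : ℤ, (r * Real.sqrt (2 * Real.pi))⁻¹ * Real.exp (-((l : ℝ) + k * N) ^ 2 / (2 * r ^ 2))

/-- Sample space for the random shifts `η = (η_u)_{u ∈ ℤ_N^d}`. -/
abbrev ηSpace (N d : ℕ) := (Fin d → ZMod N) → Fin d → ℝ

/-- The random sample point `{(z - lH)/N} + η_{u(l)}`, where `u(l) = (z - lH) mod N`. -/
def samplePt (N : ℕ) {d : ℕ} (H z : Fin d → ℤ) (η : ηSpace N d) (l : ℤ) : Fin d → ℝ :=
  fun j => Int.fract (((z j - l * H j : ℤ) : ℝ) / N)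
      + η (fun i => ((z i - l * H i : ℤ) : ZMod N)) j

/-- The randomized estimator `I(f_{N,η})_{H,L,r,z}`. -/
def estim (N : ℕ) {d : ℕ} (L r : ℝ) (f : (Fin d → ℝ) → ℂ)
    (H z : Fin d → ℤ) (η : ηSpace N d) : ℂ :=
  ∑' l : ℤ, if |(l : ℝ)| ≤ L then f (samplePt N H z η l) * ((Gwin N r L l : ℝ) : ℂ) else 0

/-- Uniform probability measure on a finite type. -/
def unifFin (α : Type*) [MeasurableSpace α] [Fintype α] : Measure α :=
  (Fintype.card α : ℝ≥0∞)⁻¹ • Measure.count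

/-- Uniform distribution on `[0, 1/N)`. -/
def cellUniform (N : ℕ) : Measure ℝ := (N : ℝ≥0∞) • volume.restrict (Set.Ico (0 : ℝ) (1 / N))

/-- The distribution of `η`: i.i.d. uniform on `[0,1/N)^d`. -/
def ηMeas (N d : ℕ) [NeZero N] : Measure (ηSpace N d) :=
  Measure.pi fun _ => Measure.pi fun _ => cellUniform N

/-- Sample space for `H` (uniform on `ℤ^d ∩ [1,N)^d`), encoded via `Fin (N-1)`. -/
abbrev Hspace (N d : ℕ) := Fin d → Fin (N - 1)

/-- Sample space for `z` (uniform on `ℤ^d ∩ [0,N)^d`). -/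
abbrev Zspace (N d : ℕ) := Fin d → Fin N

/-- Decoding of `H`: values in `ℤ ∩ [1,N)`. -/
def hDec {N d : ℕ} (H : Hspace N d) : Fin d → ℤ := fun j => (H j : ℤ) + 1

/-- Decoding of `z`: values in `ℤ ∩ [0,N)`. -/
def zDec {N d : ℕ} (z : Zspace N d) : Fin d → ℤ := fun j => (z j : ℤ)

/-- Full sample space of the algorithm: `(H, z, η)`. -/
abbrev Ωspace (N d : ℕ) := Hspace N d × Zspace N d × ηSpace N d

/-- Joint distribution of the independent random inputs `(H, z, η)`. -/
def μΩ (N d : ℕ) [NeZero N] : Measure (Ωspace N d) :=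
  (unifFin (Hspace N d)).prod ((unifFin (Zspace N d)).prod (ηMeas N d))

/-- The estimator as a function of the random input `ω = (H, z, η)`. -/
def estimRV (N : ℕ) {d : ℕ} (L r : ℝ) (f : (Fin d → ℝ) → ℂ) (ω : Ωspace N d) : ℂ :=
  estim N L r f (hDec ω.1) (zDec ω.2.1) ω.2.2

/-- Median of a finite family of reals (middle order statistic for odd size). -/
def medianReal {t : ℕ} (v : Fin t → ℝ) : ℝ :=
  ((Finset.univ.val.map v).sort (· ≤ ·)).getD ((t - 1) / 2) 0

/-- Median of complex numbers: medians of real and imaginary parts. -/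
def medianC {t : ℕ} (v : Fin t → ℂ) : ℂ :=
  ⟨medianReal fun j => (v j).re, medianReal fun j => (v j).im⟩

/-- Grid point `u/N ∈ [0,1)^d` attached to `u ∈ ℤ_N^d`. -/
def gridPt {N d : ℕ} (u : Fin d → ZMod N) : Fin d → ℝ := fun j => ((u j).val : ℝ) / N

/-- The representative of `w` modulo `N` lying in `(-N/2, N/2]`. -/
def bres (N : ℕ) (w : ℤ) : ℤ := w - N * ⌈(w : ℚ) / (N : ℚ) - 1 / 2⌉

/-- The weight `(1 + (Σ_j 2π|w_j|)^s)²` of the isotropic Sobolev norm. -/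
def sobWeight {d : ℕ} (s : ℝ) (w : Fin d → ℤ) : ℝ :=
  (1 + (∑ j, 2 * Real.pi * |(w j : ℝ)|) ^ s) ^ 2

/-- Squared isotropic Sobolev norm `‖f‖²_{H^s(𝕋^d)}` (as a sum over frequencies). -/
def sobNormSq {d : ℕ} (s : ℝ) (f : (Fin d → ℝ) → ℂ) : ℝ :=
  ∑' w : Fin d → ℤ, sobWeight s w * ‖fCoeff f w‖ ^ 2

/-- The Korobov weight `Γ_{γ,s}(w) = γ_{supp w}^s ∏_j max(1,|w_j|^s)`. -/
def korWeight {d : ℕ} (γ : Finset (Fin d) → ℝ) (s : ℝ) (w : Fin d → ℤ) : ℝ :=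
  (γ (Finset.univ.filter fun j => w j ≠ 0)) ^ s * ∏ j, max 1 (|(w j : ℝ)| ^ s)

end

private lemma countP_le_left {l : List ℝ} (hl : l.Pairwise (· ≤ ·)) {i : ℕ}
    (hi : i < l.length) {c : ℝ} (h : c < l.getD i 0) :
    l.countP (fun x => decide (x ≤ c)) ≤ i := by
  conv_lhs => rw [← List.take_append_drop i l]
  rw [List.countP_append]
  have h1 : (l.take i).countP (fun x => decide (x ≤ c)) ≤ i :=
    List.countP_le_length.trans (by rw [List.length_take]; omega)
  have h2 : (l.drop i).countP (fun x => decide (x ≤ c)) = 0 := by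
    rw [List.countP_eq_zero]
    intro x hx
    rw [List.mem_iff_getElem] at hx
    obtain ⟨j, hj, rfl⟩ := hx
    have hj' : i + j < l.length := by simp only [List.length_drop] at hj; omega
    have hle : l[i] ≤ (l.drop i)[j] := by
      rw [List.getElem_drop]
      exact hl.rel_get_of_le (a := ⟨i, hi⟩) (b := ⟨i + j, hj'⟩) (by simp)
    have hc : c < l[i] := by rwa [List.getD_eq_getElem l 0 hi] at h
    simp only [decide_eq_true_eq]
    intro hxc
    linarith
  omega

private lemma countP_le_right {l : List ℝ} (hl : l.Pairwise (· ≤ ·)) {i : ℕ}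
    (hi : i < l.length) {c : ℝ} (h : l.getD i 0 < c) :
    l.countP (fun x => decide (c ≤ x)) ≤ l.length - (i + 1) := by
  conv_lhs => rw [← List.take_append_drop (i + 1) l]
  rw [List.countP_append]
  have h1 : (l.drop (i + 1)).countP (fun x => decide (c ≤ x)) ≤ l.length - (i + 1) :=
    List.countP_le_length.trans (by rw [List.length_drop])
  have h2 : (l.take (i + 1)).countP (fun x => decide (c ≤ x)) = 0 := by
    rw [List.countP_eq_zero]
    intro x hx
    rw [List.mem_iff_getElem] at hx
    obtain ⟨j, hj, rfl⟩ := hx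
    have hj2 : j < l.length := by simp only [List.length_take] at hj; omega
    have hji : j ≤ i := by simp only [List.length_take] at hj; omega
    have hle : (l.take (i + 1))[j] ≤ l[i] := by
      rw [List.getElem_take]
      exact hl.rel_get_of_le (a := ⟨j, hj2⟩) (b := ⟨i, hi⟩) (by simpa using hji)
    have hc : l[i] < c := by rwa [List.getD_eq_getElem l 0 hi] at h
    simp only [decide_eq_true_eq]
    intro hxc
    linarith
  omega


private lemma median_gt_count {k : ℕ} (hk : Odd k) (v : Fin k → ℝ) {c : ℝ}
    (h : c < medianReal v) :
    (k + 1) / 2 ≤ (Finset.univ.filter fun j => c < v j).card := by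
  classical
  set s : Multiset ℝ := Finset.univ.val.map v with hs
  set l : List ℝ := s.sort (· ≤ ·) with hldef
  have hk1 : 1 ≤ k := hk.pos
  have hlen : l.length = k := by
    rw [hldef, Multiset.length_sort, hs, Multiset.card_map]
    simp
  have hi : (k - 1) / 2 < l.length := by omega
  have hmed : medianReal v = l.getD ((k - 1) / 2) 0 := rfl
  rw [hmed] at h
  have hsorted : l.Pairwise (· ≤ ·) := Multiset.pairwise_sort _ _
  have hA := countP_le_left hsorted hi h
  have hB := List.length_eq_countP_add_countP (fun x => decide (x ≤ c)) (l := l)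
  have hcard : (Finset.univ.filter fun j => c < v j).card
      = l.countP (fun x => decide (c < x)) := by
    rw [Finset.card_def, Finset.filter_val,
      ← Multiset.countP_map v Finset.univ.val (fun x => c < x), ← hs,
      ← Multiset.sort_eq s (· ≤ ·), ← hldef, Multiset.coe_countP]
  have hC : l.countP (fun x => decide (c < x))
      = l.countP (fun a => decide ¬decide (a ≤ c) = true) :=
    List.countP_congr (by intro x _; simp [not_le])
  omega

private lemma median_lt_count {k : ℕ} (hk : Odd k) (v : Fin k → ℝ) {c : ℝ}
    (h : medianReal v < c) :
    (k + 1) / 2 ≤ (Finset.univ.filter fun j => v j < c).card := by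
  classical
  set s : Multiset ℝ := Finset.univ.val.map v with hs
  set l : List ℝ := s.sort (· ≤ ·) with hldef
  have hk1 : 1 ≤ k := hk.pos
  have hlen : l.length = k := by
    rw [hldef, Multiset.length_sort, hs, Multiset.card_map]
    simp
  have hi : (k - 1) / 2 < l.length := by omega
  have hmed : medianReal v = l.getD ((k - 1) / 2) 0 := rfl
  rw [hmed] at h
  have hsorted : l.Pairwise (· ≤ ·) := Multiset.pairwise_sort _ _
  have hA := countP_le_right hsorted hi h
  have hB := List.length_eq_countP_add_countP (fun x => decide (c ≤ x)) (l := l)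
  have hcard : (Finset.univ.filter fun j => v j < c).card
      = l.countP (fun x => decide (x < c)) := by
    rw [Finset.card_def, Finset.filter_val,
      ← Multiset.countP_map v Finset.univ.val (fun x => x < c), ← hs,
      ← Multiset.sort_eq s (· ≤ ·), ← hldef, Multiset.coe_countP]
  have hC : l.countP (fun x => decide (x < c))
      = l.countP (fun a => decide ¬decide (c ≤ a) = true) :=
    List.countP_congr (by intro x _; simp [not_le])
  have hodd : k % 2 = 1 := Nat.odd_iff.mp hk
  omega


private lemma median_dev_aux {k : ℕ} (hk : Odd k) (v : Fin k → ℝ) {b ε : ℝ}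
    (h : ε < |medianReal v - b|) :
    (k + 1) / 2 ≤ (Finset.univ.filter fun j => ε < |v j - b|).card := by
  classical
  rcases lt_abs.mp h with h1 | h1
  · refine le_trans (median_gt_count hk v (c := b + ε) (by linarith)) (Finset.card_le_card ?_)
    intro j hj
    simp only [Finset.mem_filter, Finset.mem_univ, true_and] at hj ⊢
    exact lt_of_lt_of_le (by linarith) (le_abs_self _)
  · refine le_trans (median_lt_count hk v (c := b - ε) (by linarith)) (Finset.card_le_card ?_)
    intro j hj
    simp only [Finset.mem_filter, Finset.mem_univ, true_and] at hj ⊢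
    exact lt_of_lt_of_le (by linarith) (neg_le_abs _)

private lemma median_dev {k : ℕ} (hk : Odd k) (X : Fin k → ℂ) {a : ℂ} {ε : ℝ}
    (h : 2 * ε < ‖medianC X - a‖) :
    (k + 1) / 2 ≤ (Finset.univ.filter fun j => ε < ‖X j - a‖).card := by
  classical
  have habs : ‖medianC X - a‖ ≤
      |medianReal (fun j => (X j).re) - a.re| + |medianReal (fun j => (X j).im) - a.im| := by
    simpa [Complex.sub_re, Complex.sub_im, medianC] using
      Complex.norm_le_abs_re_add_abs_im (medianC X - a)
  have hcases : ε < |medianReal (fun j => (X j).re) - a.re|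
      ∨ ε < |medianReal (fun j => (X j).im) - a.im| := by
    by_contra hcon
    push_neg at hcon
    linarith [hcon.1, hcon.2]
  rcases hcases with hre | him
  · refine le_trans (median_dev_aux hk _ hre) (Finset.card_le_card ?_)
    intro j hj
    simp only [Finset.mem_filter, Finset.mem_univ, true_and] at hj ⊢
    calc ε < |(X j).re - a.re| := hj
      _ = |(X j - a).re| := by rw [Complex.sub_re]
      _ ≤ ‖X j - a‖ := Complex.abs_re_le_norm _
  · refine le_trans (median_dev_aux hk _ him) (Finset.card_le_card ?_)
    intro j hj
    simp only [Finset.mem_filter, Finset.mem_univ, true_and] at hj ⊢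
    calc ε < |(X j).im - a.im| := hj
      _ = |(X j - a).im| := by rw [Complex.sub_im]
      _ ≤ ‖X j - a‖ := Complex.abs_im_le_norm _


/-- the median trick for complex-valued i.i.d. random variables.
The i.i.d. sample `(X_1, …, X_k)` with common distribution `ν` is modeled by the
product measure `Measure.pi (fun _ : Fin k => ν)` on `Fin k → ℂ`. -/
theorem median_trick (ε α : ℝ) (hε0 : 0 < ε) (hε : ε < 1 / 2) (hα0 : 0 < α) (hα : α < 1 / 2)
    (a : ℂ) (k : ℕ) (hk0 : 0 < k) (hk : Odd k)
    (ν : Measure ℂ) [IsProbabilityMeasure ν]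
    (htail : ν {x : ℂ | ε < ‖x - a‖} ≤ ENNReal.ofReal α) :
    (Measure.pi fun _ : Fin k => ν) {X : Fin k → ℂ | 2 * ε < ‖medianC X - a‖}
      ≤ ENNReal.ofReal (2 ^ k * α ^ ((k : ℝ) / 2)) := by
  classical
  set B : Set ℂ := {x : ℂ | ε < ‖x - a‖} with hB
  set m := (k + 1) / 2 with hm
  have hsub : {X : Fin k → ℂ | 2 * ε < ‖medianC X - a‖} ⊆
      ⋃ S ∈ Finset.univ.powersetCard m,
        Set.univ.pi (fun j : Fin k => if j ∈ S then B else Set.univ) := by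
    intro X hX
    obtain ⟨S, hSsub, hScard⟩ := Finset.exists_subset_card_eq (median_dev hk X hX)
    refine Set.mem_iUnion₂.mpr ⟨S, Finset.mem_powersetCard.mpr ⟨Finset.subset_univ _, hScard⟩, ?_⟩
    intro j _
    by_cases hj : j ∈ S
    · simp only [hj, if_true]
      have := hSsub hj
      simp only [Finset.mem_filter, Finset.mem_univ, true_and] at this
      exact this
    · simp [hj]
  have hmeas : ∀ S : Finset (Fin k),
      (Measure.pi fun _ : Fin k => ν) (Set.univ.pi fun j => if j ∈ S then B else Set.univ)
        ≤ ENNReal.ofReal α ^ S.card := by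
    intro S
    rw [Measure.pi_pi]
    calc ∏ j : Fin k, ν (if j ∈ S then B else Set.univ)
        = ∏ j : Fin k, (if j ∈ S then ν B else 1) := by
          refine Finset.prod_congr rfl fun j _ => ?_
          split <;> simp
      _ = ∏ j ∈ S, ν B := by rw [Finset.prod_ite_mem, Finset.univ_inter]
      _ = ν B ^ S.card := Finset.prod_const _
      _ ≤ ENNReal.ofReal α ^ S.card := pow_le_pow_left' htail _
  have hα1 : α ≤ 1 := by linarith
  calc (Measure.pi fun _ : Fin k => ν) {X : Fin k → ℂ | 2 * ε < ‖medianC X - a‖}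
      ≤ ∑ S ∈ Finset.univ.powersetCard m,
          (Measure.pi fun _ : Fin k => ν)
            (Set.univ.pi fun j : Fin k => if j ∈ S then B else Set.univ) :=
        (measure_mono hsub).trans (measure_biUnion_finset_le _ _)
    _ ≤ ∑ _S ∈ Finset.univ.powersetCard m, ENNReal.ofReal α ^ m :=
        Finset.sum_le_sum fun S hS => by
          rw [← (Finset.mem_powersetCard.mp hS).2]; exact hmeas S
    _ = (k.choose m : ℝ≥0∞) * ENNReal.ofReal α ^ m := by
        rw [Finset.sum_const, Finset.card_powersetCard, Finset.card_univ, Fintype.card_fin,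
          nsmul_eq_mul]
    _ ≤ ENNReal.ofReal (2 ^ k * α ^ ((k : ℝ) / 2)) := ?_
  rw [show ((k.choose m : ℕ) : ℝ≥0∞) = ENNReal.ofReal (k.choose m) by
        simp [ENNReal.ofReal_natCast],
    ← ENNReal.ofReal_pow hα0.le, ← ENNReal.ofReal_mul (by positivity)]
  apply ENNReal.ofReal_le_ofReal
  have hc : (k.choose m : ℝ) ≤ 2 ^ k := by
    have h2 : k.choose m ≤ 2 ^ k :=
      (Finset.single_le_sum (fun j _ => Nat.zero_le (k.choose j))
        (Finset.mem_range.mpr (by omega))).trans_eq (Nat.sum_range_choose k)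
    exact_mod_cast h2
  have hp : α ^ m ≤ α ^ ((k : ℝ) / 2) := by
    rw [← Real.rpow_natCast α m]
    apply Real.rpow_le_rpow_of_exponent_ge hα0 hα1
    have hkm : k ≤ 2 * m := by omega
    have : (k : ℝ) ≤ 2 * m := by exact_mod_cast hkm
    linarith
  have h1 : (0:ℝ) ≤ α ^ m := by positivity
  have h2 : (0:ℝ) ≤ 2 ^ k := by positivity
  calc (k.choose m : ℝ) * α ^ m ≤ 2 ^ k * α ^ ((k : ℝ) / 2) :=
    mul_le_mul hc hp h1 h2
end

section
/- There exist absolute constants c > 0 and C > 0 with the following property. Let 0 < ε < 1/2, B > 1, and let N be a positive integer; set r := c·B·√(log(1/ε)) and L := r·√(2·log(1/ε)), and assume 1 < B < r < L < N/2. Then |1 − Σ_{l∈ℤ, |l|≤L} G_{L,r,l}| ≤ C·ε. -/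
open MeasureTheory Real
open scoped ENNReal NNReal

lemma pi_sq_ge_nine : (9:ℝ) ≤ Real.pi ^ 2 := by nlinarith [Real.pi_gt_three]

lemma sqrt_two_le_two : Real.sqrt 2 ≤ 2 := by
  nlinarith [Real.sq_sqrt (by norm_num : (0:ℝ) ≤ 2), Real.sqrt_nonneg 2]

lemma two_le_sqrt_two_pi : (2:ℝ) ≤ Real.sqrt (2 * Real.pi) := by
  have h4 : (4:ℝ) ≤ 2 * Real.pi := by nlinarith [Real.pi_gt_three]
  nlinarith [Real.sq_sqrt (by positivity : (0:ℝ) ≤ 2 * Real.pi),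
    Real.sqrt_nonneg (2 * Real.pi)]

lemma exp_neg_le_half' {b : ℝ} (hb : 1 ≤ b) : Real.exp (-b) ≤ 1 / 2 := by
  have h1 : Real.exp (-b) ≤ Real.exp (-1) := Real.exp_le_exp.2 (by linarith)
  have h2 : (2 : ℝ) ≤ Real.exp 1 := by linarith [Real.add_one_le_exp 1]
  have h3 : Real.exp (-1) * Real.exp 1 = 1 := by rw [← Real.exp_add]; norm_num
  nlinarith [Real.exp_pos (-1)]

lemma gauss_exponent_step {b t : ℝ} (hb : 0 ≤ b) (ht : 0 ≤ t) :
    -b * (t + 1) ^ 2 ≤ -b + t * -b := by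
  nlinarith [mul_nonneg (mul_nonneg hb ht) (by linarith : (0:ℝ) ≤ t + 1)]

lemma one_le_sq_of_one_le {r : ℝ} (h : 1 ≤ r) : (1:ℝ) ≤ r ^ 2 := by nlinarith

lemma lg_le_two_pi_sq {B lgv : ℝ} (hB : 1 ≤ B) (hlg : 0 ≤ lgv) :
    lgv ≤ 2 * Real.pi ^ 2 * (B ^ 2 * lgv) := by
  have h1 : (1:ℝ) ≤ B ^ 2 := one_le_sq_of_one_le hB
  have h2 : (1:ℝ) ≤ Real.pi ^ 2 * B ^ 2 := by nlinarith [pi_sq_ge_nine]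
  nlinarith [mul_nonneg hlg (sub_nonneg.mpr h2)]

lemma mass_final_aux {r L s : ℝ} (hr0 : 0 < r) (hL0 : 0 < L) (hrL : r ≤ L) (hs : 2 ≤ s) :
    9 * r ^ 2 ≤ r * s * 5 * L := by
  nlinarith [mul_nonneg (mul_nonneg (sub_nonneg.mpr hs) hr0.le) hL0.le,
    mul_nonneg (sub_nonneg.mpr hrL) hr0.le]

lemma exp_two_lt_nine : Real.exp 2 < 9 := by
  have h2 : Real.exp 2 = Real.exp 1 * Real.exp 1 := by rw [← Real.exp_add]; norm_num
  nlinarith [Real.exp_one_lt_d9, Real.exp_pos 1]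

lemma one_sub_exp_neg_ge {x : ℝ} (hx : 0 < x) (hx9 : Real.exp x ≤ 9) :
    x / 9 ≤ 1 - Real.exp (-x) := by
  rw [Real.exp_neg]
  have hxe : x + 1 ≤ Real.exp x := Real.add_one_le_exp x
  have hepos : 0 < Real.exp x := Real.exp_pos x
  have hinv : (Real.exp x)⁻¹ * Real.exp x = 1 := inv_mul_cancel₀ hepos.ne'
  nlinarith [mul_nonneg hx.le (sub_nonneg.mpr hx9), inv_nonneg.mpr hepos.le]

lemma sq_shift_bound {t m LL : ℝ} (ht : 0 ≤ t) (hL : 0 ≤ LL) (hm : LL ≤ m) :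
    LL ^ 2 + 2 * t * LL ≤ (t + m) ^ 2 := by
  nlinarith [sq_nonneg t]

lemma nat_gauss_summable {b : ℝ} (hb : 0 < b) (k : ℝ) (hk : 0 ≤ k) :
    Summable (fun n : ℕ => Real.exp (-b * ((n : ℝ) + k) ^ 2)) := by
  refine Summable.of_nonneg_of_le (fun n => (Real.exp_pos _).le) (fun n => ?_)
    (summable_geometric_of_lt_one (Real.exp_pos (-b)).le
      (Real.exp_lt_one_iff.mpr (neg_lt_zero.mpr hb)))
  rw [← Real.exp_nat_mul]
  apply Real.exp_le_exp.2
  rcases Nat.eq_zero_or_pos n with h | h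
  · subst h; push_cast; nlinarith [mul_nonneg hb.le (sq_nonneg k)]
  · have h1 : (1 : ℝ) ≤ (n : ℝ) := by exact_mod_cast h
    nlinarith [mul_nonneg hb.le (sq_nonneg k),
      mul_nonneg (mul_nonneg hb.le (by linarith : (0:ℝ) ≤ (n:ℝ))) hk,
      mul_nonneg (mul_nonneg hb.le (by linarith : (0:ℝ) ≤ (n:ℝ))) (by linarith : (0:ℝ) ≤ (n:ℝ) - 1)]

lemma int_gauss_summable {b : ℝ} (hb : 0 < b) :
    Summable (fun l : ℤ => Real.exp (-b * (l : ℝ) ^ 2)) := by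
  apply Summable.of_nat_of_neg_add_one
  · simpa using nat_gauss_summable hb 0 le_rfl
  · have := nat_gauss_summable hb 1 zero_le_one
    apply this.congr
    intro n
    congr 2
    push_cast
    ring

lemma theta_decomp {β : ℝ} (hβ : 0 < β) :
    ∑' l : ℤ, Real.exp (-β * (l : ℝ) ^ 2)
      = 1 + 2 * ∑' n : ℕ, Real.exp (-β * ((n : ℝ) + 1) ^ 2) := by
  have hb0 : Summable (fun n : ℕ => Real.exp (-β * (n : ℝ) ^ 2)) := by
    simpa using nat_gauss_summable hβ 0 le_rfl
  have hb1 : Summable (fun n : ℕ => Real.exp (-β * ((n : ℝ) + 1) ^ 2)) :=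
    nat_gauss_summable hβ 1 zero_le_one
  have hFn : Summable (fun n : ℕ => Real.exp (-β * (((n : ℕ) : ℤ) : ℝ) ^ 2)) :=
    hb0.congr fun n => by norm_cast
  have hFm : Summable (fun n : ℕ => Real.exp (-β * (((-(n + 1) : ℤ)) : ℝ) ^ 2)) :=
    hb1.congr fun n => by congr 1; push_cast; ring
  rw [tsum_of_nat_of_neg_add_one (f := fun l : ℤ => Real.exp (-β * (l : ℝ) ^ 2)) hFn hFm]
  have e1 : ∑' n : ℕ, Real.exp (-β * (((n : ℕ) : ℤ) : ℝ) ^ 2)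
      = ∑' n : ℕ, Real.exp (-β * (n : ℝ) ^ 2) := tsum_congr fun n => by norm_cast
  have e2 : ∑' n : ℕ, Real.exp (-β * (((-(n + 1) : ℤ)) : ℝ) ^ 2)
      = ∑' n : ℕ, Real.exp (-β * ((n : ℝ) + 1) ^ 2) :=
    tsum_congr fun n => by congr 1; push_cast; ring
  have e3 : ∑' n : ℕ, Real.exp (-β * ((n + 1 : ℕ) : ℝ) ^ 2)
      = ∑' n : ℕ, Real.exp (-β * ((n : ℝ) + 1) ^ 2) :=
    tsum_congr fun n => by congr 1; push_cast; ring
  rw [e1, e2, Summable.tsum_eq_zero_add hb0, e3]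
  norm_num
  ring

lemma tail_decomp (f : ℕ → ℝ) (F : ℤ → ℝ) (hF : ∀ l : ℤ, F l = f l.natAbs)
    (hf : Summable f) :
    ∑' l : ℤ, F l = (∑' n : ℕ, f n) + ∑' n : ℕ, f (n + 1) := by
  have h1 : ∀ n : ℕ, F (n : ℤ) = f n := fun n => by rw [hF]; simp
  have h2 : ∀ n : ℕ, F (-((n : ℤ) + 1)) = f (n + 1) := fun n => by
    rw [hF]
    congr 1
  have s1 : Summable fun n : ℕ => F (n : ℤ) := hf.congr fun n => (h1 n).symm
  have s2 : Summable fun n : ℕ => F (-((n : ℤ) + 1)) :=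
    ((summable_nat_add_iff 1).mpr hf).congr fun n => (h2 n).symm
  rw [tsum_of_nat_of_neg_add_one s1 s2, tsum_congr h1, tsum_congr h2]


set_option maxHeartbeats 2000000 in
/-- the truncated periodized Gaussian window has total mass close to 1. -/
theorem window_mass_close_to_one :
    ∃ c C : ℝ, 0 < c ∧ 0 < C ∧
      ∀ (ε B : ℝ) (N : ℕ) (r L : ℝ),
        0 < ε → ε < 1 / 2 → 1 < B → 0 < N →
        r = c * B * Real.sqrt (Real.log (1 / ε)) →
        L = r * Real.sqrt (2 * Real.log (1 / ε)) →
        B < r → r < L → L < (N : ℝ) / 2 →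
        |1 - ∑' l : ℤ, (if |(l : ℝ)| ≤ L then Gwin N r L l else 0)| ≤ C * ε := by
  refine ⟨1, 100, one_pos, by norm_num, ?_⟩
  intro ε B N r L hε hε2 hB hN hrdef hLdef hBr hrL hLN
  have hr0 : 0 < r := lt_trans (lt_trans one_pos hB) hBr
  have hr1 : 1 < r := lt_trans hB hBr
  have hL0 : 0 < L := lt_trans hr0 hrL
  have hN0 : (0 : ℝ) < N := by exact_mod_cast hN
  have h1ε : (1 : ℝ) < 1 / ε := by rw [lt_div_iff₀ hε]; linarith
  have hlog0 : 0 < Real.log (1 / ε) := Real.log_pos h1ε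
  set lg := Real.log (1 / ε) with hlg
  clear_value lg
  have hs2 : Real.sqrt lg ^ 2 = lg := Real.sq_sqrt hlog0.le
  have hrs : r = B * Real.sqrt lg := by rw [hrdef]; ring
  have hr2 : r ^ 2 = B ^ 2 * lg := by rw [hrs, mul_pow, hs2]
  have hεlg : Real.exp (-lg) = ε := by
    rw [hlg, Real.exp_neg, Real.exp_log (by positivity), one_div, inv_inv]
  have hL2 : L ^ 2 = 2 * r ^ 2 * lg := by
    rw [hLdef, mul_pow, Real.sq_sqrt (by positivity : (0:ℝ) ≤ 2 * lg)]; ring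
  have hεexp : Real.exp (-(L ^ 2 / (2 * r ^ 2))) = ε := by
    rw [show L ^ 2 / (2 * r ^ 2) = lg by
      rw [hL2, mul_div_cancel_left₀ _ (by positivity : (2 * r ^ 2 : ℝ) ≠ 0)], hεlg]
  have hsr : Real.sqrt lg ≤ r := by
    rw [hrs]; exact le_mul_of_one_le_left (Real.sqrt_nonneg lg) hB.le
  -- the Gaussian profile
  set A := (r * Real.sqrt (2 * Real.pi))⁻¹ with hA
  have hApos : 0 < A := by rw [hA]; positivity
  clear_value A
  set gg : ℤ → ℝ := fun l => A * Real.exp (-(l : ℝ) ^ 2 / (2 * r ^ 2)) with hgg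
  clear_value gg
  have hb : (0 : ℝ) < (2 * r ^ 2)⁻¹ := by positivity
  have hggnn : ∀ l, 0 ≤ gg l := fun l => by
    simp only [hgg]
    exact mul_nonneg hApos.le (Real.exp_pos _).le
  have hgsum : Summable gg := by
    apply ((int_gauss_summable hb).mul_left A).congr
    intro l
    simp only [hgg]
    congr 2
    ring
  -- Step 1 : window collapse
  have hwin : ∀ l : ℤ, |(l : ℝ)| ≤ L → Gwin N r L l = gg l := by
    intro l hl
    unfold Gwin
    rw [tsum_eq_single (0 : ℤ) ?_]
    · simp only [hgg, hA, Int.cast_zero, zero_mul, add_zero, if_pos hl]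
    · intro k hk
      rw [if_neg]
      intro habs
      have hk1 : (1 : ℝ) ≤ |(k : ℝ)| := by exact_mod_cast Int.one_le_abs hk
      have h1 : (N : ℝ) ≤ |(k : ℝ) * N| := by
        rw [abs_mul, abs_of_nonneg hN0.le]
        exact le_mul_of_one_le_left hN0.le hk1
      have h2 : |(k : ℝ) * N| ≤ |(l : ℝ) + k * N| + |(l : ℝ)| := by
        calc |(k : ℝ) * N| = |((l : ℝ) + k * N) + (-(l : ℝ))| := by ring_nf
          _ ≤ |(l : ℝ) + k * N| + |(-(l : ℝ))| := abs_add_le _ _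
          _ = |(l : ℝ) + k * N| + |(l : ℝ)| := by rw [abs_neg]
      linarith only [habs, h1, h2, hl, hLN]
  have hS_eq : (∑' l : ℤ, (if |(l : ℝ)| ≤ L then Gwin N r L l else 0))
      = ∑' l : ℤ, (if |(l : ℝ)| ≤ L then gg l else 0) := by
    refine tsum_congr fun l => ?_
    split_ifs with h
    · exact hwin l h
    · rfl
  -- summability of truncated pieces
  have hSsum : Summable (fun l : ℤ => if |(l : ℝ)| ≤ L then gg l else 0) := by
    refine Summable.of_nonneg_of_le (fun l => ?_) (fun l => ?_) hgsum
    · split_ifs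
      exacts [hggnn l, le_rfl]
    · split_ifs
      exacts [le_rfl, hggnn l]
  have hFsum : Summable (fun l : ℤ => if |(l : ℝ)| ≤ L then 0 else gg l) := by
    refine Summable.of_nonneg_of_le (fun l => ?_) (fun l => ?_) hgsum
    · split_ifs
      exacts [le_rfl, hggnn l]
    · split_ifs
      exacts [hggnn l, le_rfl]
  have hsplit : (∑' l : ℤ, (if |(l : ℝ)| ≤ L then gg l else 0))
      + (∑' l : ℤ, (if |(l : ℝ)| ≤ L then 0 else gg l)) = ∑' l : ℤ, gg l := by
    rw [← Summable.tsum_add hSsum hFsum]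
    exact tsum_congr fun l => by split_ifs <;> simp
  -- Poisson summation
  obtain ⟨β, hβ⟩ : ∃ β : ℝ, β = 2 * Real.pi ^ 2 * r ^ 2 := ⟨_, rfl⟩
  have hβpos : 0 < β := by rw [hβ]; positivity
  have hπ2 : (9:ℝ) ≤ Real.pi ^ 2 := pi_sq_ge_nine
  have hr21 : (1:ℝ) ≤ r ^ 2 := one_le_sq_of_one_le hr1.le
  have hβ1 : 1 ≤ β := by
    rw [hβ]
    linarith only [mul_le_mul hπ2 hr21 zero_le_one (by positivity : (0:ℝ) ≤ Real.pi ^ 2)]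
  have hPoisson : ∑' l : ℤ, gg l = ∑' l : ℤ, Real.exp (-β * (l : ℝ) ^ 2) := by
    obtain ⟨a, ha⟩ : ∃ a : ℝ, a = (2 * Real.pi * r ^ 2)⁻¹ := ⟨_, rfl⟩
    have ha0 : 0 < a := by rw [ha]; positivity
    have h1 : ∀ l : ℤ, gg l = A * Real.exp (-Real.pi * a * (l : ℝ) ^ 2) := by
      intro l
      simp only [hgg]
      congr 1
      congr 1
      rw [ha]
      field_simp
    have hsqrt : a ^ ((1:ℝ)/2) = (r * Real.sqrt (2 * Real.pi))⁻¹ := by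
      rw [ha, ← Real.sqrt_eq_rpow, Real.sqrt_inv,
        Real.sqrt_mul (by positivity : (0:ℝ) ≤ 2 * Real.pi), Real.sqrt_sq hr0.le, mul_comm]
    have hA1 : A * (1 / a ^ ((1:ℝ)/2)) = 1 := by
      rw [hsqrt, hA, one_div, inv_inv]
      exact inv_mul_cancel₀ (by positivity : (0:ℝ) < r * Real.sqrt (2 * Real.pi)).ne'
    calc ∑' l : ℤ, gg l = ∑' l : ℤ, A * Real.exp (-Real.pi * a * (l : ℝ) ^ 2) := tsum_congr h1
      _ = A * ∑' l : ℤ, Real.exp (-Real.pi * a * (l : ℝ) ^ 2) := tsum_mul_left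
      _ = A * (1 / a ^ ((1:ℝ)/2) * ∑' l : ℤ, Real.exp (-Real.pi / a * (l : ℝ) ^ 2)) := by
          rw [Real.tsum_exp_neg_mul_int_sq ha0]
      _ = ∑' l : ℤ, Real.exp (-Real.pi / a * (l : ℝ) ^ 2) := by rw [← mul_assoc, hA1, one_mul]
      _ = ∑' l : ℤ, Real.exp (-β * (l : ℝ) ^ 2) := by
          refine tsum_congr fun l => ?_
          congr 2
          rw [ha, div_eq_mul_inv, inv_inv, hβ]
          ring
  have hbn1 : Summable (fun n : ℕ => Real.exp (-β * ((n : ℝ) + 1) ^ 2)) :=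
    nat_gauss_summable hβpos 1 zero_le_one
  have hTβ := theta_decomp hβpos
  set W := ∑' n : ℕ, Real.exp (-β * ((n : ℝ) + 1) ^ 2) with hW
  -- bounding W
  have hW0 : 0 ≤ W := by
    rw [hW]; exact tsum_nonneg fun n => (Real.exp_pos _).le
  have hεβ : Real.exp (-β) ≤ ε := by
    rw [← hεlg]
    apply Real.exp_le_exp.2
    have h : lg ≤ β := by
      rw [hβ, hr2]
      exact lg_le_two_pi_sq hB.le hlog0.le
    linarith only [h]
  have hehalf : Real.exp (-β) ≤ 1 / 2 := exp_neg_le_half' hβ1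
  have hWle : W ≤ 2 * ε := by
    rw [hW]
    have hq1 : Real.exp (-β) < 1 := Real.exp_lt_one_iff.mpr (by linarith only [hβ1])
    have hterm : ∀ n : ℕ, Real.exp (-β * ((n : ℝ) + 1) ^ 2)
        ≤ Real.exp (-β) * Real.exp (-β) ^ n := by
      intro n
      rw [← Real.exp_nat_mul, ← Real.exp_add]
      apply Real.exp_le_exp.2
      exact gauss_exponent_step hβpos.le (Nat.cast_nonneg n)
    calc (∑' n : ℕ, Real.exp (-β * ((n : ℝ) + 1) ^ 2))
        ≤ ∑' n : ℕ, Real.exp (-β) * Real.exp (-β) ^ n :=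
          Summable.tsum_le_tsum hterm hbn1
            ((summable_geometric_of_lt_one (Real.exp_pos _).le hq1).mul_left _)
      _ = Real.exp (-β) * (1 - Real.exp (-β))⁻¹ := by
          rw [tsum_mul_left, tsum_geometric_of_lt_one (Real.exp_pos _).le hq1]
      _ ≤ ε * 2 := by
          have h12 : (1:ℝ)/2 ≤ 1 - Real.exp (-β) := by linarith only [hehalf]
          apply mul_le_mul hεβ ?_ (inv_nonneg.mpr (by linarith only [hehalf])) hε.le
          calc (1 - Real.exp (-β))⁻¹ ≤ ((1:ℝ)/2)⁻¹ :=
                inv_anti₀ (by norm_num) h12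
            _ = 2 := by norm_num
      _ = 2 * ε := by ring
  clear_value W
  -- the tail over |l| > L
  set fn : ℕ → ℝ := fun n => if (n : ℝ) ≤ L then 0
      else A * Real.exp (-(n : ℝ) ^ 2 / (2 * r ^ 2)) with hfn
  clear_value fn
  have hfnnn : ∀ n, 0 ≤ fn n := fun n => by
    simp only [hfn]
    split_ifs
    · exact le_rfl
    · exact mul_nonneg hApos.le (Real.exp_pos _).le
  have hgn : Summable (fun n : ℕ => A * Real.exp (-(n : ℝ) ^ 2 / (2 * r ^ 2))) := by
    apply ((nat_gauss_summable hb 0 le_rfl).mul_left A).congr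
    intro n
    congr 2
    ring
  have hfnsum : Summable fn := by
    refine Summable.of_nonneg_of_le hfnnn (fun n => ?_) hgn
    simp only [hfn]
    split_ifs
    · exact mul_nonneg hApos.le (Real.exp_pos _).le
    · exact le_rfl
  have hFf : ∀ l : ℤ, (if |(l : ℝ)| ≤ L then 0 else gg l) = fn l.natAbs := by
    intro l
    have h1 : |(l : ℝ)| = ((l.natAbs : ℕ) : ℝ) := by
      simp [Nat.cast_natAbs]
    have h2 : ((l : ℝ)) ^ 2 = ((l.natAbs : ℕ) : ℝ) ^ 2 := by rw [← sq_abs, h1]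
    simp only [hgg, hfn]
    rw [h1, h2]
  have htail_eq : (∑' l : ℤ, (if |(l : ℝ)| ≤ L then 0 else gg l))
      = (∑' n : ℕ, fn n) + ∑' n : ℕ, fn (n + 1) :=
    tail_decomp fn _ hFf hfnsum
  -- geometric bound on the ℕ tail
  obtain ⟨x, hx⟩ : ∃ x : ℝ, x = L / r ^ 2 := ⟨_, rfl⟩
  have hx0 : 0 < x := by rw [hx]; positivity
  obtain ⟨q, hq⟩ : ∃ q : ℝ, q = Real.exp (-x) := ⟨_, rfl⟩
  have hq0 : 0 ≤ q := by rw [hq]; exact (Real.exp_pos _).le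
  have hq1 : q < 1 := by rw [hq]; exact Real.exp_lt_one_iff.mpr (by linarith only [hx0])
  have hsum0 : ∑ i ∈ Finset.range ⌈L⌉₊, fn i = 0 := by
    apply Finset.sum_eq_zero
    intro i hi
    simp only [hfn]
    rw [if_pos (le_of_lt (Nat.lt_ceil.mp (Finset.mem_range.mp hi)))]
  have hshift : ∑' n : ℕ, fn n = ∑' n : ℕ, fn (n + ⌈L⌉₊) := by
    rw [← Summable.sum_add_tsum_nat_add ⌈L⌉₊ hfnsum, hsum0, zero_add]
  have hterm2 : ∀ n : ℕ, fn (n + ⌈L⌉₊) ≤ A * ε * q ^ n := by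
    intro n
    have hkey : A * ε * q ^ n = A * Real.exp (-(L ^ 2 / (2 * r ^ 2)) + (n : ℝ) * -x) := by
      rw [Real.exp_add, hεexp, hq, Real.exp_nat_mul]
      ring
    rw [hkey]
    simp only [hfn]
    split_ifs with h
    · exact mul_nonneg hApos.le (Real.exp_pos _).le
    · have hcast : ((n + ⌈L⌉₊ : ℕ) : ℝ) = (n : ℝ) + ((⌈L⌉₊ : ℕ) : ℝ) := by push_cast; ring
      rw [hcast]
      apply mul_le_mul_of_nonneg_left _ hApos.le
      apply Real.exp_le_exp.2
      have hn : (0:ℝ) ≤ n := Nat.cast_nonneg n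
      have hm : L ≤ ((⌈L⌉₊ : ℕ) : ℝ) := Nat.le_ceil L
      have hkey2 : L ^ 2 + 2 * (n : ℝ) * L ≤ ((n : ℝ) + ((⌈L⌉₊ : ℕ) : ℝ)) ^ 2 :=
        sq_shift_bound hn hL0.le hm
      have e : -(L ^ 2 / (2 * r ^ 2)) + (n : ℝ) * -x
          = -((L ^ 2 + 2 * (n : ℝ) * L) / (2 * r ^ 2)) := by
        rw [hx]; field_simp; ring
      rw [e, neg_div]
      apply neg_le_neg
      exact (div_le_div_iff_of_pos_right (by positivity)).mpr hkey2
  have htail1 : ∑' n : ℕ, fn n ≤ A * ε * (1 - q)⁻¹ := by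
    rw [hshift]
    calc (∑' n : ℕ, fn (n + ⌈L⌉₊)) ≤ ∑' n : ℕ, A * ε * q ^ n :=
          Summable.tsum_le_tsum hterm2 ((summable_nat_add_iff ⌈L⌉₊).mpr hfnsum)
            ((summable_geometric_of_lt_one hq0 hq1).mul_left _)
      _ = A * ε * (1 - q)⁻¹ := by
          rw [tsum_mul_left, tsum_geometric_of_lt_one hq0 hq1]
  have hx2 : x ≤ 2 := by
    rw [hx, div_le_iff₀ (by positivity)]
    have hsq2 : Real.sqrt 2 ≤ 2 := sqrt_two_le_two
    have hLval : L = r * (Real.sqrt 2 * Real.sqrt lg) := by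
      rw [hLdef, Real.sqrt_mul (by norm_num : (0:ℝ) ≤ 2)]
    calc L = r * (Real.sqrt 2 * Real.sqrt lg) := hLval
      _ ≤ r * (2 * r) := by
          apply mul_le_mul_of_nonneg_left _ hr0.le
          exact mul_le_mul hsq2 hsr (Real.sqrt_nonneg _) (by norm_num)
      _ = 2 * r ^ 2 := by ring
  have hexp9 : Real.exp x ≤ 9 :=
    le_trans (Real.exp_le_exp.2 hx2) exp_two_lt_nine.le
  have h1q : x / 9 ≤ 1 - q := by
    rw [hq]
    exact one_sub_exp_neg_ge hx0 hexp9
  have hA5 : A * (1 - q)⁻¹ ≤ 5 := by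
    have h2pi : (2:ℝ) ≤ Real.sqrt (2 * Real.pi) := two_le_sqrt_two_pi
    have hi1 : (1 - q)⁻¹ ≤ (x / 9)⁻¹ := inv_anti₀ (by positivity) h1q
    have hi2 : (x / 9)⁻¹ = 9 * r ^ 2 / L := by
      rw [hx]
      field_simp
    have hi3 : A * (9 * r ^ 2 / L) ≤ 5 := by
      rw [hA, inv_mul_le_iff₀ (by positivity), div_le_iff₀ hL0]
      linarith only [mass_final_aux hr0 hL0 hrL.le h2pi]
    calc A * (1 - q)⁻¹ ≤ A * (9 * r ^ 2 / L) := by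
          rw [← hi2]; exact mul_le_mul_of_nonneg_left hi1 hApos.le
      _ ≤ 5 := hi3
  have htail2 : ∑' n : ℕ, fn n ≤ 5 * ε := by
    calc ∑' n : ℕ, fn n ≤ A * ε * (1 - q)⁻¹ := htail1
      _ = A * (1 - q)⁻¹ * ε := by ring
      _ ≤ 5 * ε := mul_le_mul_of_nonneg_right hA5 hε.le
  have hshift1 : ∑' n : ℕ, fn (n + 1) ≤ ∑' n : ℕ, fn n := by
    rw [Summable.tsum_eq_zero_add hfnsum]
    linarith only [hfnnn 0]
  have htailnn : 0 ≤ ∑' l : ℤ, (if |(l : ℝ)| ≤ L then 0 else gg l) :=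
    tsum_nonneg fun l => by
      split_ifs
      · exact le_rfl
      · exact hggnn l
  -- assembling everything
  rw [hS_eq]
  have hT : (∑' l : ℤ, (if |(l : ℝ)| ≤ L then gg l else 0))
      = 1 + 2 * W - ∑' l : ℤ, (if |(l : ℝ)| ≤ L then 0 else gg l) := by
    have h := hsplit.trans (hPoisson.trans hTβ)
    linarith only [h]
  rw [hT]
  have hup : ∑' l : ℤ, (if |(l : ℝ)| ≤ L then 0 else gg l) ≤ 10 * ε := by
    rw [htail_eq]
    linarith only [htail2, hshift1]
  rw [abs_le]
  constructor
  · linarith only [hW0, hWle, htailnn, hup, hε]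
  · linarith only [hW0, hWle, htailnn, hup, hε]
end

section
/- Let N be a positive integer, r > 0, and w ∈ ℤ. Define the periodized Gaussian G_{r,l} := Σ_{k∈ℤ} (r√(2π))^{−1} exp(−(l+kN)²/(2r²)) for l ∈ ℤ. Then Σ_{l=0}^{N−1} G_{r,l}·exp(2πi·w·l/N) = Σ_{k∈ℤ} exp(−2·(π·r·(k + w/N))²). -/
open MeasureTheory Real
open scoped ENNReal NNReal

/-- Poisson summation identity for the periodized Gaussian window. -/
theorem periodized_gaussian_poisson (N : ℕ) (hN : 0 < N) (r : ℝ) (hr : 0 < r) (w : ℤ) :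
    ∑ l ∈ Finset.range N, ((Gfull N r (l : ℤ) : ℝ) : ℂ)
        * Complex.exp (2 * (Real.pi : ℂ) * Complex.I * (w : ℂ) * (l : ℂ) / (N : ℂ))
      = ∑' k : ℤ,
          ((Real.exp (-(2 * (Real.pi * r * ((k : ℝ) + (w : ℝ) / (N : ℝ))) ^ 2)) : ℝ) : ℂ) := by
  have hπ := Real.pi_pos
  set x : ℝ := r * Real.sqrt (2 * Real.pi) with hx
  have hx0 : 0 < x := by positivity
  set a : ℝ := (2 * Real.pi * r ^ 2)⁻¹ with ha
  have ha0 : 0 < a := by positivity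
  have hax : a = (x⁻¹) ^ 2 := by
    rw [ha, hx]
    rw [show ((r * Real.sqrt (2*Real.pi))⁻¹)^2 = ((r * Real.sqrt (2*Real.pi))^2)⁻¹ by ring,
      mul_pow, Real.sq_sqrt (by positivity : (0:ℝ) ≤ 2*Real.pi)]
    ring_nf
  have hNC : (N : ℂ) ≠ 0 := Nat.cast_ne_zero.mpr hN.ne'
  have hrC : (r : ℂ) ≠ 0 := Complex.ofReal_ne_zero.mpr hr.ne'
  have hπC : (Real.pi : ℂ) ≠ 0 := Complex.ofReal_ne_zero.mpr hπ.ne'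
  set b : ℂ := Complex.I * w / N with hb
  obtain ⟨g, hg⟩ : ∃ g : ℤ → ℂ, g = fun m : ℤ => ((x⁻¹ : ℝ) : ℂ) *
      Complex.exp (-(Real.pi : ℂ) * (a : ℝ) * (m : ℂ) ^ 2 + 2 * (Real.pi : ℂ) * b * (m : ℂ)) :=
    ⟨_, rfl⟩
  have hsum : Summable g := by
    rw [hg]
    apply Summable.mul_left
    have h := (summable_jacobiTheta₂_term_iff ((w : ℂ) / N) ((a : ℝ) * Complex.I)).mpr
      (by simpa using ha0)
    refine h.congr fun n => ?_
    rw [jacobiTheta₂_term, hb]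
    congr 1
    ring_nf
    rw [Complex.I_sq]
    ring
  have haC : ((a:ℝ):ℂ) ≠ 0 := Complex.ofReal_ne_zero.mpr ha0.ne'
  -- Step 1: LHS equals the full tsum of g
  have step1 : ∑ l ∈ Finset.range N, ((Gfull N r (l : ℤ) : ℝ) : ℂ)
        * Complex.exp (2 * (Real.pi : ℂ) * Complex.I * (w : ℂ) * (l : ℂ) / (N : ℂ))
      = ∑' m : ℤ, g m := by
    have hterm : ∀ (l : ℕ) (k : ℤ),
        (((x⁻¹ : ℝ) * Real.exp (-(((l:ℤ):ℝ) + k * N) ^ 2 / (2 * r ^ 2)) : ℝ) : ℂ)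
          * Complex.exp (2 * (Real.pi : ℂ) * Complex.I * (w : ℂ) * (l : ℂ) / (N : ℂ))
        = g (k * N + l) := by
      intro l k
      rw [hg]
      simp only []
      push_cast
      rw [mul_assoc, ← Complex.exp_add]
      congr 1
      have : -(Real.pi : ℂ) * (a : ℝ) * ((k : ℂ) * N + l) ^ 2
            + 2 * (Real.pi : ℂ) * b * ((k : ℂ) * N + l)
          = (-(((l : ℂ)) + k * N) ^ 2 / (2 * r ^ 2)
            + 2 * (Real.pi : ℂ) * Complex.I * (w : ℂ) * (l : ℂ) / (N : ℂ))
            + (w : ℂ) * (k : ℂ) * (2 * (Real.pi : ℂ) * Complex.I) := by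
        rw [hb, ha]
        push_cast
        field_simp
        ring
      rw [this]
      simp only [Complex.exp_add]
      have h1 := Complex.exp_int_mul_two_pi_mul_I (w * k)
      push_cast at h1
      rw [h1, mul_one]
    have hNne : (N : ℤ) ≠ 0 := by exact_mod_cast hN.ne'
    haveI : NeZero N := ⟨hN.ne'⟩
    set e : Fin N × ℤ ≃ ℤ := (Equiv.prodComm (Fin N) ℤ).trans (Int.divModEquiv N).symm with he
    have hsum2 : Summable fun p : Fin N × ℤ => g (e p) := e.summable_iff.mpr hsum
    have h3 : ∀ p : Fin N × ℤ, e p = p.2 * N + (p.1 : ℤ) := by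
      intro p; simp [he, Int.divModEquiv]
    have hsum3 : ∀ l : Fin N, Summable fun k : ℤ => g (k * N + (l : ℤ)) := fun l =>
      hsum.comp_injective fun k1 k2 h => mul_right_cancel₀ hNne (add_right_cancel h)
    calc ∑ l ∈ Finset.range N, ((Gfull N r (l : ℤ) : ℝ) : ℂ)
          * Complex.exp (2 * (Real.pi : ℂ) * Complex.I * (w : ℂ) * (l : ℂ) / (N : ℂ))
        = ∑ l ∈ Finset.range N, ∑' k : ℤ, g (k * N + l) := by
          refine Finset.sum_congr rfl fun l _ => ?_
          rw [Gfull, Complex.ofReal_tsum, ← tsum_mul_right]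
          exact tsum_congr fun k => hterm l k
      _ = ∑ l : Fin N, ∑' k : ℤ, g (k * N + l) :=
          (Fin.sum_univ_eq_sum_range (fun l => ∑' k : ℤ, g (k * N + l)) N).symm
      _ = ∑' l : Fin N, ∑' k : ℤ, g (k * N + l) := (tsum_fintype _).symm
      _ = ∑' p : Fin N × ℤ, g (e p) := by
          rw [Summable.tsum_prod' hsum2 fun l => by simpa only [h3] using hsum3 l]
          exact tsum_congr fun l => tsum_congr fun k => by rw [h3 ⟨l, k⟩]
      _ = ∑' m : ℤ, g m := e.tsum_eq g
  rw [step1]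
  -- Step 2: apply the quadratic Poisson summation
  have haRe : 0 < ((a : ℝ) : ℂ).re := by simpa using ha0
  rw [hg, tsum_mul_left, Complex.tsum_exp_neg_quadratic haRe b]
  have hroot : ((a : ℝ) : ℂ) ^ (1/2 : ℂ) = ((x⁻¹ : ℝ) : ℂ) := by
    rw [show ((1/2 : ℂ)) = ((1/2 : ℝ) : ℂ) by norm_num, ← Complex.ofReal_cpow ha0.le]
    rw [hax, ← Real.rpow_natCast (x⁻¹) 2, ← Real.rpow_mul (by positivity)]
    norm_num
  rw [hroot, ← mul_assoc]
  have hxC : ((x : ℝ) : ℂ) ≠ 0 := Complex.ofReal_ne_zero.mpr hx0.ne'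
  rw [show ((x⁻¹ : ℝ) : ℂ) * (1 / ((x⁻¹ : ℝ) : ℂ)) = 1 by
    push_cast
    field_simp]
  rw [one_mul]
  rw [← (Equiv.neg ℤ).tsum_eq fun n : ℤ =>
    ((Real.exp (-(2 * (Real.pi * r * ((n : ℝ) + (w : ℝ) / (N : ℝ))) ^ 2)) : ℝ) : ℂ)]
  refine tsum_congr fun n => ?_
  rw [Complex.ofReal_exp]
  congr 1
  simp only [Equiv.neg_apply]
  rw [hb, ha]
  push_cast
  field_simp
  ring_nf
  simp only [Complex.I_sq, show (Complex.I : ℂ) ^ 4 = 1 by rw [show (4:ℕ) = 2*2 from rfl, pow_mul, Complex.I_sq]; norm_num]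
  ring
end
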